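/- Let r > 0 and let Ω ⊆ W_r × ℂ^m be open with W_r × {0} ⊆ Ω, where W_r := (−2−r, 2+r)^m + i(−r,r)^m. Let α : Ω → W_r be complex analytic with α(z,0) = z and ∂_w α(z, ·)′(0) = id_{ℂ^m} for each z ∈ W_r, such that θ : Ω → W_r × W_r, (z,w) ↦ (z, α(z,w)) is a complex analytic diffeomorphism onto an open image. Then for each ε ∈ (0, r) there exists δ₀ > 0 such that W_ε × B_{δ₀}(0) ⊆ Ω and, for every open U ⊆ W_ε and δ ∈ (0, δ₀], the set θ(U × B_δ(0)) contains ⋃_{z∈U} ({z} × B_{δ/2}(z)); moreover for each z ∈ U the map w ↦ pr₂(θ^{-1}(z,w)) on B_{δ/2}(z) is Lipschitz continuous with constant 2. -/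

import Mathlib

/-!
Write `α (z, w) = z + w + q (z, w)`. By compactness of `closure W_ε`, the slices `{z} × B_R(0)`
lie in `Ω` for a radius `R` uniform in `z ∈ W_ε`, and there `q (z, ·)` is bounded (since `α`
takes values in the bounded set `W_r`) and vanishes to second order at `0`. The Schwarz lemma
then makes `q (z, ·)` `1/2`-Lipschitz on a ball `B_{δ₀}(0)` with `δ₀` depending only on `R` and
`r`, so `α (z, ·)` is a `1/2`-perturbation of the identity there: it maps `B_δ(0)` onto a set
containing `B_{δ/2}(z)`, and its inverse `w ↦ pr₂ (θ⁻¹ (z, w))` is `2`-Lipschitz.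
-/

open Set
open scoped NNReal

/-- `W_r = (−2−r, 2+r)^m + i(−r,r)^m ⊆ ℂ^m`, with `ℂ^m = Fin m → ℂ` carrying the
maximum norm. -/
def Wset (m : ℕ) (r : ℝ) : Set (Fin m → ℂ) :=
  {z | ∀ k, |(z k).re| < 2 + r ∧ |(z k).im| < r}

open Metric

namespace Complex

variable {E F : Type*} [NormedAddCommGroup E] [NormedSpace ℂ E]
  [NormedAddCommGroup F] [NormedSpace ℂ F]

theorem norm_le_mul_div_sq_of_hasFDerivAt_zero {g : E → F} {R M : ℝ}
    (hg : DifferentiableOn ℂ g (ball 0 R)) (hg0 : g 0 = 0) (hg' : HasFDerivAt g (0 : E →L[ℂ] F) 0)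
    (hM : ∀ w ∈ ball (0 : E) R, ‖g w‖ ≤ M) {w : E} (hw : w ∈ ball 0 R) :
    ‖g w‖ ≤ M * (‖w‖ / R) ^ 2 := by
  have hmaps : MapsTo g (ball 0 R) (closedBall (g 0) M) := fun v hv => by
    simpa [hg0] using hM v hv
  have hlo : (g · - g 0) =o[nhds 0] (fun v : E ↦ ‖v - 0‖ ^ 1) := by
    simpa using hg'.isLittleO.norm_right
  simpa [hg0] using dist_le_mul_div_pow_of_mapsTo_ball_of_isLittleO hg hmaps hlo hw

theorem approximatesLinearOn_id_of_norm_sub_le {f : E → E} {R M δ : ℝ}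
    (hf : DifferentiableOn ℂ f (ball 0 R)) (hf' : HasFDerivAt f (ContinuousLinearMap.id ℂ E) 0)
    (hM : ∀ w ∈ ball (0 : E) R, ‖f w - f 0 - w‖ ≤ M) (hδR : 3 * δ ≤ R)
    (hδM : 18 * M * δ ≤ R ^ 2) :
    ApproximatesLinearOn f (ContinuousLinearMap.id ℂ E) (ball 0 δ) (1 / 2) := by
  intro x hx y hy
  have hδ : 0 < δ := pos_of_mem_ball hx
  have hR : 0 < R := by linarith
  have hM0 : 0 ≤ M := le_trans (norm_nonneg _) (hM 0 (mem_ball_self hR))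
  set g : E → E := fun w => f w - f 0 - w
  have hg : DifferentiableOn ℂ g (ball 0 R) := by fun_prop
  have hg' : HasFDerivAt g (0 : E →L[ℂ] E) 0 :=
    ((hf'.sub_const (f 0)).sub (hasFDerivAt_id (0 : E))).congr_fderiv (sub_self _)
  have hsmall : ∀ w ∈ ball (0 : E) (3 * δ), ‖g w‖ ≤ M * (3 * δ / R) ^ 2 := fun w hw => by
    have hw' : w ∈ ball (0 : E) R := ball_subset_ball hδR hw
    calc ‖g w‖ ≤ M * (‖w‖ / R) ^ 2 :=
          norm_le_mul_div_sq_of_hasFDerivAt_zero hg (by simp [g]) hg' hM hw'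
      _ ≤ M * (3 * δ / R) ^ 2 := by
          gcongr; exact (mem_ball_zero_iff.mp hw).le
  -- Schwarz on `B_{2δ}(y)`, where `g` is `O(δ²)`, gives a Lipschitz constant `O(δ)`.
  have hball : ball y (2 * δ) ⊆ ball (0 : E) (3 * δ) :=
    ball_subset_ball' (by linarith [mem_ball_zero_iff.mp hy, dist_zero_right y])
  have hmaps : MapsTo g (ball y (2 * δ)) (closedBall (g y) (2 * (M * (3 * δ / R) ^ 2))) := by
    intro w hw
    have hw' := hball hw
    rw [mem_closedBall, dist_eq_norm]
    linarith [norm_sub_le (g w) (g y), hsmall w hw', hsmall y (ball_subset_ball (by linarith) hy)]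
  have hxy : x ∈ ball y (2 * δ) := by
    rw [mem_ball, dist_eq_norm]
    linarith [norm_sub_le x y, mem_ball_zero_iff.mp hx, mem_ball_zero_iff.mp hy]
  have hcoef : 2 * (M * (3 * δ / R) ^ 2) / (2 * δ) ≤ 1 / 2 := by
    rw [div_le_iff₀ (by positivity)]
    field_simp
    nlinarith
  have hgxy : f x - f y - (x - y) = g x - g y := by simp only [g]; abel
  calc ‖f x - f y - ContinuousLinearMap.id ℂ E (x - y)‖ = dist (g x) (g y) := by
        rw [ContinuousLinearMap.id_apply, hgxy, dist_eq_norm]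
    _ ≤ 2 * (M * (3 * δ / R) ^ 2) / (2 * δ) * dist x y :=
        dist_le_div_mul_dist_of_mapsTo_ball
          (hg.mono (hball.trans (ball_subset_ball hδR))) hmaps hxy
    _ ≤ 1 / 2 * ‖x - y‖ := by
        rw [dist_eq_norm]; gcongr
    _ = ((1 / 2 : ℝ≥0) : ℝ) * ‖x - y‖ := by norm_num

theorem exists_approximatesLinearOn_id_of_norm_le {R C : ℝ} (hR : 0 < R) (hC : 0 ≤ C) :
    ∃ δ₀ > 0, δ₀ ≤ R ∧ ∀ f : E → E, DifferentiableOn ℂ f (ball 0 R) →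
      HasFDerivAt f (ContinuousLinearMap.id ℂ E) 0 → (∀ w ∈ ball (0 : E) R, ‖f w‖ ≤ C) →
      ApproximatesLinearOn f (ContinuousLinearMap.id ℂ E) (ball 0 δ₀) (1 / 2) := by
  have hδR : 3 * (R ^ 2 / (18 * (2 * C + R))) ≤ R := by
    rw [← mul_div_assoc, div_le_iff₀ (by positivity)]
    nlinarith
  refine ⟨R ^ 2 / (18 * (2 * C + R)), by positivity, by linarith [hδR], fun f hf hf' hfC => ?_⟩
  refine approximatesLinearOn_id_of_norm_sub_le hf hf' (fun w hw => ?_) hδR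
    (by rw [mul_div_cancel₀ _ (by positivity)])
  calc ‖f w - f 0 - w‖ ≤ ‖f w‖ + ‖f 0‖ + ‖w‖ :=
        (norm_sub_le _ _).trans (by gcongr; exact norm_sub_le _ _)
    _ ≤ 2 * C + R := by
        linarith [hfC w hw, hfC 0 (mem_ball_self hR), mem_ball_zero_iff.mp hw]

end Complex

namespace ApproximatesLinearOn

variable {𝕜 E : Type*} [NontriviallyNormedField 𝕜] [NormedAddCommGroup E] [NormedSpace 𝕜 E]
  {f : E → E} {s : Set E}

theorem norm_sub_le_two_mul (hf : ApproximatesLinearOn f (ContinuousLinearMap.id 𝕜 E) s (1 / 2))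
    {x y : E} (hx : x ∈ s) (hy : y ∈ s) : ‖x - y‖ ≤ 2 * ‖f x - f y‖ := by
  have h := hf x hx y hy
  rw [ContinuousLinearMap.id_apply] at h
  have htri : ‖x - y‖ ≤ ‖f x - f y‖ + ‖f x - f y - (x - y)‖ := by
    simpa using norm_sub_le (f x - f y) (f x - f y - (x - y))
  norm_num at h
  linarith

theorem exists_mem_ball_eq [CompleteSpace E] {b : E} {δ₀ δ : ℝ}
    (hf : ApproximatesLinearOn f (ContinuousLinearMap.id 𝕜 E) (ball b δ₀) (1 / 2))
    (hδ : δ ≤ δ₀) {w : E} (hw : w ∈ ball (f b) (δ / 2)) : ∃ w' ∈ ball b δ, f w' = w := by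
  -- `(ContinuousLinearEquiv.refl 𝕜 E).toNonlinearRightInverse` has norm `0` when `E` is trivial.
  let idInv : (ContinuousLinearMap.id 𝕜 E).NonlinearRightInverse :=
    { toFun := id, nnnorm := 1, bound' := fun _ => by simp, right_inv' := fun _ => rfl }
  set ρ := 2 * dist w (f b)
  have hρδ : ρ < δ := by rw [mem_ball] at hw; linarith
  have hsurj := surjOn_closedBall_of_nonlinearRightInverse
    (hf.mono_set (closedBall_subset_ball (hρδ.trans_le hδ))) idInv (by positivity) subset_rfl
  have hw' : w ∈ closedBall (f b) (((idInv.nnnorm : ℝ)⁻¹ - (1 / 2 : ℝ≥0)) * ρ) := by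
    rw [mem_closedBall]; norm_num [idInv, ρ]; linarith
  obtain ⟨w', hw', rfl⟩ := hsurj hw'
  exact ⟨w', closedBall_subset_ball hρδ hw', rfl⟩

end ApproximatesLinearOn

theorem exists_pos_forall_norm_lt_mem_of_isCompact {E F : Type*} [PseudoMetricSpace E]
    [SeminormedAddCommGroup F] {K : Set E} (hK : IsCompact K) {Ω : Set (E × F)} (hΩ : IsOpen Ω)
    (hKΩ : ∀ z ∈ K, (z, 0) ∈ Ω) : ∃ R > 0, ∀ z ∈ K, ∀ w : F, ‖w‖ < R → (z, w) ∈ Ω := by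
  obtain ⟨U, V, -, hV, hKU, h0V, hUV⟩ := generalized_tube_lemma hK isCompact_singleton hΩ
    (by rintro ⟨z, w⟩ ⟨hz, rfl⟩; exact hKΩ z hz)
  obtain ⟨R, hR, hRV⟩ := Metric.isOpen_iff.mp hV 0 (h0V rfl)
  exact ⟨R, hR, fun z hz w hw => hUV ⟨hKU hz, hRV (mem_ball_zero_iff.mpr hw)⟩⟩

theorem norm_le_of_mem_Wset {m : ℕ} {r : ℝ} (hr : 0 ≤ r) {z : Fin m → ℂ} (hz : z ∈ Wset m r) :
    ‖z‖ ≤ 2 + 2 * r := by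
  refine (pi_norm_le_iff_of_nonneg (by linarith)).mpr fun k => ?_
  calc ‖z k‖ ≤ |(z k).re| + |(z k).im| := Complex.norm_le_abs_re_add_abs_im (z k)
    _ ≤ 2 + 2 * r := by linarith [(hz k).1, (hz k).2]

theorem exists_isCompact_between_Wset {m : ℕ} {ε r : ℝ} (hεr : ε < r) :
    ∃ K, IsCompact K ∧ Wset m ε ⊆ K ∧ K ⊆ Wset m r := by
  refine ⟨univ.pi fun _ => Icc (-(2 + ε)) (2 + ε) ×ℂ Icc (-ε) ε,
    isCompact_univ_pi fun _ => isCompact_Icc.reProdIm isCompact_Icc, ?_, ?_⟩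
  · intro z hz k _
    exact ⟨abs_le.mp (hz k).1.le, abs_le.mp (hz k).2.le⟩
  · intro z hz k
    obtain ⟨hre, him⟩ := hz k (mem_univ k)
    exact ⟨(abs_le.mpr hre).trans_lt (by linarith), (abs_le.mpr him).trans_lt hεr⟩

theorem final_loc_general (m : ℕ) (r : ℝ)
    (Ω : Set ((Fin m → ℂ) × (Fin m → ℂ))) (hΩ : IsOpen Ω)
    (hzero : ∀ z ∈ Wset m r, ((z, 0) : (Fin m → ℂ) × (Fin m → ℂ)) ∈ Ω)
    (α : (Fin m → ℂ) × (Fin m → ℂ) → (Fin m → ℂ))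
    (hα : DifferentiableOn ℂ α Ω)
    (hα0 : ∀ z ∈ Wset m r, α (z, 0) = z)
    (hαW : ∀ p ∈ Ω, α p ∈ Wset m r)
    (hderiv : ∀ z ∈ Wset m r,
      HasFDerivAt (fun w => α (z, w)) (ContinuousLinearMap.id ℂ (Fin m → ℂ)) 0)
    (ψ : (Fin m → ℂ) × (Fin m → ℂ) → (Fin m → ℂ) × (Fin m → ℂ))
    (hψ : ∀ p ∈ Ω, ψ (p.1, α p) = p) :
    ∀ ε ∈ Set.Ioo (0 : ℝ) r, ∃ δ₀ > (0 : ℝ),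
      (∀ z ∈ Wset m ε, ∀ w : Fin m → ℂ, ‖w‖ < δ₀ →
        ((z, w) : (Fin m → ℂ) × (Fin m → ℂ)) ∈ Ω) ∧
      ∀ U ⊆ Wset m ε, IsOpen U → ∀ δ ∈ Set.Ioc (0 : ℝ) δ₀,
        (∀ z ∈ U, ∀ w ∈ Metric.ball z (δ / 2),
          ∃ w' ∈ Metric.ball (0 : Fin m → ℂ) δ,
            ((z, w') : (Fin m → ℂ) × (Fin m → ℂ)) ∈ Ω ∧ α (z, w') = w) ∧
        ∀ z ∈ U, ∀ w₁ ∈ Metric.ball z (δ / 2), ∀ w₂ ∈ Metric.ball z (δ / 2),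
          ‖(ψ (z, w₁)).2 - (ψ (z, w₂)).2‖ ≤ 2 * ‖w₁ - w₂‖ := by
  rintro ε ⟨hε, hεr⟩
  obtain ⟨K, hK, hεK, hKr⟩ := exists_isCompact_between_Wset (m := m) hεr
  obtain ⟨R, hR, hRΩ⟩ :=
    exists_pos_forall_norm_lt_mem_of_isCompact hK hΩ fun z hz => hzero z (hKr hz)
  have hslice : ∀ z ∈ Wset m ε, ∀ w ∈ ball (0 : Fin m → ℂ) R, (z, w) ∈ Ω :=
    fun z hz w hw => hRΩ z (hεK hz) w (mem_ball_zero_iff.mp hw)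
  obtain ⟨δ₀, hδ₀, hδ₀R, hinv⟩ :=
    Complex.exists_approximatesLinearOn_id_of_norm_le (E := Fin m → ℂ) hR (C := 2 + 2 * r)
      (by linarith)
  have happrox : ∀ z ∈ Wset m ε, ApproximatesLinearOn (fun w => α (z, w))
      (ContinuousLinearMap.id ℂ (Fin m → ℂ)) (ball 0 δ₀) (1 / 2) := fun z hz =>
    hinv _ (hα.comp (by fun_prop : Differentiable ℂ fun w => (z, w)).differentiableOn
      (hslice z hz)) (hderiv z (hKr (hεK hz)))
      fun w hw => norm_le_of_mem_Wset (by linarith) (hαW _ (hslice z hz w hw))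
  refine ⟨δ₀, hδ₀, fun z hz w hw => hslice z hz w (mem_ball_zero_iff.mpr (by linarith)),
    fun U hU _ δ hδ => ?_⟩
  have hsurj : ∀ z ∈ U, ∀ w ∈ ball z (δ / 2),
      ∃ w' ∈ ball (0 : Fin m → ℂ) δ, (z, w') ∈ Ω ∧ α (z, w') = w := by
    intro z hz w hw
    rw [← hα0 z (hKr (hεK (hU hz)))] at hw
    obtain ⟨w', hw', rfl⟩ := (happrox z (hU hz)).exists_mem_ball_eq hδ.2 hw
    exact ⟨w', hw', hslice z (hU hz) w' (ball_subset_ball (hδ.2.trans hδ₀R) hw'), rfl⟩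
  refine ⟨hsurj, fun z hz w₁ hw₁ w₂ hw₂ => ?_⟩
  obtain ⟨w₁', hw₁', hΩ₁, rfl⟩ := hsurj z hz w₁ hw₁
  obtain ⟨w₂', hw₂', hΩ₂, rfl⟩ := hsurj z hz w₂ hw₂
  rw [hψ _ hΩ₁, hψ _ hΩ₂]
  exact (happrox z (hU hz)).norm_sub_le_two_mul (ball_subset_ball hδ.2 hw₁')
    (ball_subset_ball hδ.2 hw₂')

/-- Lemma on local inversion of a complex analytic local addition (`final-loc`):
let `α : Ω → W_r` be complex analytic on an open `Ω ⊆ W_r × ℂ^m` containing `W_r × {0}`,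
with `α (z, 0) = z`, `∂_w α (z, ·)'(0) = id`, such that `θ : (z,w) ↦ (z, α (z,w))` has
open image and complex analytic inverse `ψ`.  Then for each `ε ∈ (0, r)` there is
`δ₀ > 0` with `W_ε × B_{δ₀}(0) ⊆ Ω` such that for every open `U ⊆ W_ε` and
`δ ∈ (0, δ₀]`, the image `θ (U × B_δ(0))` contains `⋃_{z ∈ U} {z} × B_{δ/2}(z)`, and on
each `B_{δ/2}(z)` the map `w ↦ pr₂ (θ⁻¹ (z, w))` is Lipschitz with constant `2`. -/
theorem final_loc (m : ℕ) (r : ℝ) (hr : 0 < r)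
    (Ω : Set ((Fin m → ℂ) × (Fin m → ℂ))) (hΩ : IsOpen Ω)
    (hΩW : ∀ p ∈ Ω, p.1 ∈ Wset m r)
    (hzero : ∀ z ∈ Wset m r, ((z, 0) : (Fin m → ℂ) × (Fin m → ℂ)) ∈ Ω)
    (α : (Fin m → ℂ) × (Fin m → ℂ) → (Fin m → ℂ))
    (hα : DifferentiableOn ℂ α Ω)
    (hα0 : ∀ z ∈ Wset m r, α (z, 0) = z)
    (hαW : ∀ p ∈ Ω, α p ∈ Wset m r)
    (hderiv : ∀ z ∈ Wset m r,
      HasFDerivAt (fun w => α (z, w)) (ContinuousLinearMap.id ℂ (Fin m → ℂ)) 0)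
    (hopen : IsOpen ((fun p => (p.1, α p)) '' Ω))
    (ψ : (Fin m → ℂ) × (Fin m → ℂ) → (Fin m → ℂ) × (Fin m → ℂ))
    (hψdiff : DifferentiableOn ℂ ψ ((fun p => (p.1, α p)) '' Ω))
    (hψ : ∀ p ∈ Ω, ψ (p.1, α p) = p) :
    ∀ ε ∈ Set.Ioo (0 : ℝ) r, ∃ δ₀ > (0 : ℝ),
      (∀ z ∈ Wset m ε, ∀ w : Fin m → ℂ, ‖w‖ < δ₀ →
        ((z, w) : (Fin m → ℂ) × (Fin m → ℂ)) ∈ Ω) ∧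
      ∀ U ⊆ Wset m ε, IsOpen U → ∀ δ ∈ Set.Ioc (0 : ℝ) δ₀,
        (∀ z ∈ U, ∀ w ∈ Metric.ball z (δ / 2),
          ∃ w' ∈ Metric.ball (0 : Fin m → ℂ) δ,
            ((z, w') : (Fin m → ℂ) × (Fin m → ℂ)) ∈ Ω ∧ α (z, w') = w) ∧
        ∀ z ∈ U, ∀ w₁ ∈ Metric.ball z (δ / 2), ∀ w₂ ∈ Metric.ball z (δ / 2),
          ‖(ψ (z, w₁)).2 - (ψ (z, w₂)).2‖ ≤ 2 * ‖w₁ - w₂‖ :=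
  final_loc_general m r Ω hΩ hzero α hα hα0 hαW hderiv ψ hψ
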